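/- arXiv:1809.06440 — 3 statements merged into one kernel-verified Lean document; each statement's English description precedes it below -/
import Mathlib

section
/- Consider the distributed quantized weight-balancing update: n_i(k) = 1 if b_i(k) ≥ d_i^+·γ(k) and 0 otherwise, and b_i(k+1) = b_i(k) − γ(k)·d_i^+·n_i(k) + γ(k)·∑_{j∈N_i^-} n_j(k). Then the total imbalance ‖ε(k)‖₁ = ∑_i |b_i(k)| is non-increasing: ∑_i |b_i(k+1)| ≤ ∑_i |b_i(k)|. -/
theorem stmt_9 {V : Type*} [Fintype V] [DecidableEq V]
    (E : V → V → Prop) [DecidableRel E]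
    (hloop : ∀ i, ¬ E i i)
    (γ : ℝ) (hγ : 0 < γ)
    (b b' : V → ℝ) (n : V → ℝ)
    (hn : ∀ i, n i = if ((Finset.univ.filter (fun j => E i j)).card : ℝ) * γ ≤ b i then 1 else 0)
    (hupd : ∀ i, b' i = b i - γ * ((Finset.univ.filter (fun j => E i j)).card : ℝ) * n i
        + γ * ∑ j ∈ Finset.univ.filter (fun j => E j i), n j) :
    ∑ i, |b' i| ≤ ∑ i, |b i| := by
  set d : V → ℝ := fun i => ((Finset.univ.filter (fun j => E i j)).card : ℝ) with hd
  have hdnn : ∀ i, 0 ≤ d i := fun i => Nat.cast_nonneg _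
  have hnnn : ∀ i, 0 ≤ n i := by
    intro i; rw [hn i]; split <;> norm_num
  have hrnn : ∀ i, 0 ≤ ∑ j ∈ Finset.univ.filter (fun j => E j i), n j := by
    intro i; exact Finset.sum_nonneg fun j _ => hnnn j
  have key : ∀ i, |b' i| ≤ |b i| - γ * (d i * n i)
      + γ * ∑ j ∈ Finset.univ.filter (fun j => E j i), n j := by
    intro i
    have hb' := hupd i
    have hni := hn i
    set r : ℝ := ∑ j ∈ Finset.univ.filter (fun j => E j i), n j with hr
    have hrn : 0 ≤ r := hrnn i
    by_cases h : ((Finset.univ.filter (fun j => E i j)).card : ℝ) * γ ≤ b i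
    · rw [if_pos h] at hni
      have h1 : b' i = b i - γ * d i + γ * r := by rw [hb', hni]; ring
      rw [hni, mul_one]
      have h2 : 0 ≤ b' i := by
        rw [h1]; nlinarith [mul_nonneg hγ.le hrn]
      rw [abs_of_nonneg h2, h1]
      have := le_abs_self (b i)
      linarith
    · rw [if_neg h] at hni
      have h1 : b' i = b i + γ * r := by rw [hb', hni]; ring
      rw [hni, mul_zero, mul_zero, sub_zero, h1]
      calc |b i + γ * r| ≤ |b i| + |γ * r| := abs_add_le _ _
        _ = |b i| + γ * r := by rw [abs_of_nonneg (by positivity : (0:ℝ) ≤ γ * r)]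
  have hsum : ∑ i, |b' i| ≤ ∑ i, (|b i| - γ * (d i * n i)
      + γ * ∑ j ∈ Finset.univ.filter (fun j => E j i), n j) :=
    Finset.sum_le_sum (fun i _ => key i)
  have hswap : ∑ i, ∑ j ∈ Finset.univ.filter (fun j => E j i), n j
      = ∑ i, d i * n i := by
    simp only [Finset.sum_filter]
    rw [Finset.sum_comm]
    refine Finset.sum_congr rfl fun j _ => ?_
    rw [← Finset.sum_filter, Finset.sum_const, nsmul_eq_mul, hd, mul_comm]
  calc ∑ i, |b' i|
      ≤ ∑ i, (|b i| - γ * (d i * n i)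
          + γ * ∑ j ∈ Finset.univ.filter (fun j => E j i), n j) := hsum
    _ = ∑ i, |b i| - γ * ∑ i, (d i * n i)
          + γ * ∑ i, ∑ j ∈ Finset.univ.filter (fun j => E j i), n j := by
        rw [Finset.sum_add_distrib, Finset.sum_sub_distrib, ← Finset.mul_sum, ← Finset.mul_sum]
    _ = ∑ i, |b i| := by rw [hswap]; ring
end

section
/- Consider the distributed quantized weight-balancing update with n_i(k) = 1 if b_i(k) ≥ d_i^+·γ(k) and 0 otherwise, and b_i(k+1) = b_i(k) − γ(k)·d_i^+·n_i(k) + γ(k)·∑_{j∈N_i^-} n_j(k). Assume every b_i(k) is an integer multiple of γ(k) > 0. If there exist i ∈ V and j ∈ N_i^+ with n_i(k) = 1 and b_j(k) < 0 (the 'decreasing event'), then ∑_i |b_i(k+1)| ≤ ∑_i |b_i(k)| − 2γ(k); otherwise ∑_i |b_i(k+1)| = ∑_i |b_i(k)|. -/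
theorem stmt_10 {V : Type*} [Fintype V] [DecidableEq V]
    (E : V → V → Prop) [DecidableRel E]
    (hloop : ∀ i, ¬ E i i)
    (γ : ℝ) (hγ : 0 < γ)
    (b b' : V → ℝ) (n : V → ℝ)
    (hmult : ∀ i, ∃ m : ℤ, b i = (m : ℝ) * γ)
    (hn : ∀ i, n i = if ((Finset.univ.filter (fun j => E i j)).card : ℝ) * γ ≤ b i then 1 else 0)
    (hupd : ∀ i, b' i = b i - γ * ((Finset.univ.filter (fun j => E i j)).card : ℝ) * n i
        + γ * ∑ j ∈ Finset.univ.filter (fun j => E j i), n j) :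
    ((∃ i j, E i j ∧ n i = 1 ∧ b j < 0) → ∑ i, |b' i| ≤ ∑ i, |b i| - 2 * γ) ∧
    (¬ (∃ i j, E i j ∧ n i = 1 ∧ b j < 0) → ∑ i, |b' i| = ∑ i, |b i|) := by
  have habs : ∀ x : ℝ, |x| = x + 2 * max (-x) 0 := by
    intro x
    rcases le_or_gt 0 x with h | h
    · rw [abs_of_nonneg h, max_eq_right (by linarith)]; ring
    · rw [abs_of_neg h, max_eq_left (by linarith)]; ring
  have hn01 : ∀ i, n i = 0 ∨ n i = 1 := by
    intro i; rw [hn i]; split_ifs <;> simp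
  have hnn : ∀ i, 0 ≤ n i := by
    intro i; rcases hn01 i with h | h <;> rw [h] <;> norm_num
  have hcnn : ∀ i, 0 ≤ ∑ j ∈ Finset.univ.filter (fun j => E j i), n j := fun i =>
    Finset.sum_nonneg fun j _ => hnn j
  have hn1 : ∀ i, n i = 1 → ((Finset.univ.filter (fun j => E i j)).card : ℝ) * γ ≤ b i := by
    intro i h1
    rw [hn i] at h1
    by_contra h
    rw [if_neg h] at h1
    norm_num at h1
  have hnneg : ∀ i, b i < 0 → n i = 0 := by
    intro i hb
    rw [hn i, if_neg]
    intro h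
    have : (0:ℝ) ≤ ((Finset.univ.filter (fun j => E i j)).card : ℝ) * γ :=
      mul_nonneg (Nat.cast_nonneg _) hγ.le
    linarith
  have hb'nn : ∀ i, 0 ≤ b i → 0 ≤ b' i := by
    intro i hb
    rw [hupd i]
    rcases hn01 i with h | h
    · rw [h]
      have := hcnn i
      nlinarith
    · rw [h]
      have h2 := hn1 i h
      have := hcnn i
      nlinarith
  have hble : ∀ i, b i < 0 →
      b' i = b i + γ * ∑ j ∈ Finset.univ.filter (fun j => E j i), n j := by
    intro i hb
    rw [hupd i, hnneg i hb]; ring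
  have hint : ∀ i, b i < 0 → b i ≤ -γ := by
    intro i hb
    obtain ⟨m, hm⟩ := hmult i
    have hm0 : (m:ℝ) < 0 := by
      by_contra h
      push_neg at h
      nlinarith
    have hm1 : m ≤ -1 := by
      have : m < 0 := by exact_mod_cast hm0
      omega
    have hmr : (m:ℝ) ≤ -1 := by exact_mod_cast hm1
    nlinarith
  have hswap : ∑ i, ∑ j ∈ Finset.univ.filter (fun j => E j i), n j
      = ∑ i, ((Finset.univ.filter (fun j => E i j)).card : ℝ) * n i := by
    calc ∑ i, ∑ j ∈ Finset.univ.filter (fun j => E j i), n j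
        = ∑ i, ∑ j, if E j i then n j else 0 := by
          refine Finset.sum_congr rfl fun i _ => ?_
          rw [Finset.sum_filter]
      _ = ∑ j, ∑ i, if E j i then n j else 0 := Finset.sum_comm
      _ = ∑ j, ((Finset.univ.filter (fun i => E j i)).card : ℝ) * n j := by
          refine Finset.sum_congr rfl fun j _ => ?_
          rw [← Finset.sum_filter, Finset.sum_const, nsmul_eq_mul]
  have hcons : ∑ i, b' i = ∑ i, b i := by
    have h1 : ∑ i, b' i = ∑ i, b i
        - γ * ∑ i, ((Finset.univ.filter (fun j => E i j)).card : ℝ) * n i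
        + γ * ∑ i, ∑ j ∈ Finset.univ.filter (fun j => E j i), n j := by
      rw [Finset.mul_sum, Finset.mul_sum, ← Finset.sum_sub_distrib, ← Finset.sum_add_distrib]
      refine Finset.sum_congr rfl fun i _ => ?_
      rw [hupd i]; ring
    rw [h1, hswap]; ring
  have hNle : ∀ i, max (-(b' i)) 0 ≤ max (-(b i)) 0 := by
    intro i
    rcases le_or_gt 0 (b i) with h | h
    · rw [max_eq_right (by linarith [hb'nn i h])]
      exact le_max_right _ _
    · have h1 := hble i h
      have h2 := hcnn i
      exact max_le_max (by nlinarith) le_rfl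
  have hkey : ∀ f : V → ℝ, ∑ i, |f i| = ∑ i, f i + 2 * ∑ i, max (-(f i)) 0 := by
    intro f
    rw [Finset.mul_sum, ← Finset.sum_add_distrib]
    exact Finset.sum_congr rfl fun i _ => habs (f i)
  constructor
  · rintro ⟨i₀, j₀, hE, hn1', hbneg⟩
    have hc1 : (1:ℝ) ≤ ∑ j ∈ Finset.univ.filter (fun j => E j j₀), n j := by
      have hmem : i₀ ∈ Finset.univ.filter (fun j => E j j₀) := by
        simp [hE]
      have := Finset.single_le_sum (f := n) (fun j _ => hnn j) hmem
      rw [hn1'] at this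
      exact this
    have hj₀ : max (-(b' j₀)) 0 ≤ max (-(b j₀)) 0 - γ := by
      have h1 := hble j₀ hbneg
      have h2 := hint j₀ hbneg
      rw [max_eq_left (by linarith : (0:ℝ) ≤ -(b j₀))]
      refine max_le ?_ ?_ <;> nlinarith
    have hsumN : ∑ i, max (-(b' i)) 0 ≤ (∑ i, max (-(b i)) 0) - γ := by
      rw [← Finset.add_sum_erase _ (fun i => max (-(b' i)) 0) (Finset.mem_univ j₀),
          ← Finset.add_sum_erase _ (fun i => max (-(b i)) 0) (Finset.mem_univ j₀)]
      have hrest : ∑ i ∈ Finset.univ.erase j₀, max (-(b' i)) 0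
          ≤ ∑ i ∈ Finset.univ.erase j₀, max (-(b i)) 0 :=
        Finset.sum_le_sum fun i _ => hNle i
      linarith
    rw [hkey b', hkey b, hcons]
    linarith
  · intro hno
    push_neg at hno
    have hNeq : ∀ i, max (-(b' i)) 0 = max (-(b i)) 0 := by
      intro i
      rcases le_or_gt 0 (b i) with h | h
      · rw [max_eq_right (by linarith [hb'nn i h]), max_eq_right (by linarith)]
      · have hc0 : ∑ j ∈ Finset.univ.filter (fun j => E j i), n j = 0 := by
          refine Finset.sum_eq_zero fun j hj => ?_
          rcases hn01 j with h0 | h1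
          · exact h0
          · exfalso
            have hEj : E j i := (Finset.mem_filter.mp hj).2
            have := hno j i hEj h1
            linarith
        have : b' i = b i := by rw [hble i h, hc0]; ring
        rw [this]
    rw [hkey b', hkey b, hcons]
    have : ∑ i, max (-(b' i)) 0 = ∑ i, max (-(b i)) 0 :=
      Finset.sum_congr rfl fun i _ => hNeq i
    rw [this]
end

section
/- Consider the distributed quantized weight-balancing update with n_i(k) = 1 if b_i(k) ≥ d_i^+·γ(k) and 0 otherwise. If the decreasing event does not occur at iteration k (i.e., there is no pair i ∈ V, j ∈ N_i^+ with n_i(k) = 1 and b_j(k) < 0), then the sets V^+(k) = {i : b_i(k) ≥ 0} and V^{--}(k) = {i : b_i(k) < 0} are unchanged: V^+(k+1) = V^+(k) and V^{--}(k+1) = V^{--}(k). -/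
theorem stmt_11 {V : Type*} [Fintype V] [DecidableEq V]
    (E : V → V → Prop) [DecidableRel E]
    (hloop : ∀ i, ¬ E i i)
    (γ : ℝ) (hγ : 0 < γ)
    (b b' : V → ℝ) (n : V → ℝ)
    (hn : ∀ i, n i = if ((Finset.univ.filter (fun j => E i j)).card : ℝ) * γ ≤ b i then 1 else 0)
    (hupd : ∀ i, b' i = b i - γ * ((Finset.univ.filter (fun j => E i j)).card : ℝ) * n i
        + γ * ∑ j ∈ Finset.univ.filter (fun j => E j i), n j)
    (hno : ¬ (∃ i j, E i j ∧ n i = 1 ∧ b j < 0)) :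
    {i : V | 0 ≤ b' i} = {i : V | 0 ≤ b i} ∧ {i : V | b' i < 0} = {i : V | b i < 0} := by
  push_neg at hno
  have key : ∀ i, 0 ≤ b' i ↔ 0 ≤ b i := by
    intro i
    by_cases hb : 0 ≤ b i
    · constructor
      · intro _; exact hb
      · intro _
        rw [hupd i]
        have hsum : 0 ≤ ∑ j ∈ Finset.univ.filter (fun j => E j i), n j := by
          apply Finset.sum_nonneg
          intro j _
          rw [hn j]
          split <;> norm_num
        have h1 : 0 ≤ b i - γ * ((Finset.univ.filter (fun j => E i j)).card : ℝ) * n i := by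
          rw [hn i]
          split_ifs with h
          · nlinarith
          · simpa using hb
        nlinarith [mul_nonneg hγ.le hsum]
    · push_neg at hb
      constructor
      · intro h'
        exfalso
        rw [hupd i] at h'
        have hni : n i = 0 := by
          rw [hn i]
          split_ifs with h
          · exfalso
            have : (0:ℝ) ≤ ((Finset.univ.filter (fun j => E i j)).card : ℝ) * γ := by positivity
            linarith
          · rfl
        have hsum : ∑ j ∈ Finset.univ.filter (fun j => E j i), n j = 0 := by
          apply Finset.sum_eq_zero
          intro j hj
          rw [Finset.mem_filter] at hj
          rw [hn j]
          split_ifs with h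
          · exfalso
            have := hno j i hj.2 (by rw [hn j]; simp [h])
            linarith
          · rfl
        rw [hni, hsum] at h'
        simp at h'
        linarith
      · intro h; linarith
  constructor
  · ext i; simp [key i]
  · ext i
    have := key i
    simp only [Set.mem_setOf_eq]
    constructor <;> intro h <;> by_contra hc <;> push_neg at hc
    · exact absurd (this.mpr hc) (not_le.mpr h)
    · exact absurd (this.mp hc) (not_le.mpr h)
end
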